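/- arXiv:1810.09174 — 2 statements merged into one kernel-verified Lean document; each statement's English description precedes it below -/
import Mathlib

section
/- Suppose the transition probabilities of a channel satisfy the pointwise detailed balance relation e^{-β_f E_m} p(m→n) = e^{-β_f E_n} p(n→m) for all m, n. Then for every energy value E, the absorption probability P(+E) = Σ_{m,n : E_n − E_m = E} p_m(β_i) p(m→n) and the release probability P(−E) = Σ_{m,n : E_n − E_m = E} p_n(β_i) p(n→m) satisfy P(+E) = e^{(β_i − β_f)E} P(−E), where p_m(β_i) = e^{-β_i E_m}/Σ_k e^{-β_i E_k}. -/
open Matrix BigOperators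
open scoped ComplexOrder

noncomputable section

/-- `d×d` complex matrices. -/
abbrev Mat (d : ℕ) := Matrix (Fin d) (Fin d) ℂ

/-- The rank-one matrix `|u⟩⟨w|`. -/
def ketbra {d : ℕ} (u w : Fin d → ℂ) : Mat d := Matrix.vecMulVec u (star w)

/-- The matrix element `⟨u|A|w⟩`. -/
def matElem {d : ℕ} (u : Fin d → ℂ) (A : Mat d) (w : Fin d → ℂ) : ℂ :=
  star u ⬝ᵥ (A *ᵥ w)

/-- `v` is an orthonormal family. -/
def ONB {d : ℕ} (v : Fin d → Fin d → ℂ) : Prop :=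
  ∀ i j, star (v i) ⬝ᵥ v j = if i = j then 1 else 0

/-- The Gibbs population `p_m(β) = e^{-βE_m} / Σ_k e^{-βE_k}`. -/
def gibbsP {d : ℕ} (E : Fin d → ℝ) (β : ℝ) (m : Fin d) : ℝ :=
  Real.exp (-(β * E m)) / ∑ k, Real.exp (-(β * E k))

/-- The Gibbs state `ρ_β = e^{-βH}/Tr[e^{-βH}]`, written via the spectral
decomposition of `H` in its orthonormal eigenbasis `v`. -/
def gibbs {d : ℕ} (v : Fin d → Fin d → ℂ) (E : Fin d → ℝ) (β : ℝ) : Mat d :=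
  ∑ m, (gibbsP E β m : ℂ) • ketbra (v m) (v m)

lemma gibbsP_eq_exp_mul_gibbsP {d : ℕ} (E : Fin d → ℝ) (β : ℝ) (m n : Fin d) :
    gibbsP E β n = Real.exp (-(β * (E n - E m))) * gibbsP E β m := by
  rw [gibbsP, gibbsP, mul_div_assoc', ← Real.exp_add]
  ring_nf

lemma eq_exp_mul_of_detailed_balance {ι : Type*} (E : ι → ℝ) (β : ℝ) (p : ι → ι → ℝ) {m n : ι}
    (hDB : Real.exp (-(β * E m)) * p m n = Real.exp (-(β * E n)) * p n m) :
    p m n = Real.exp (-(β * (E n - E m))) * p n m := by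
  apply mul_left_cancel₀ (Real.exp_ne_zero (-(β * E m)))
  rw [hDB, ← mul_assoc, ← Real.exp_add]
  ring_nf

lemma gibbsP_mul_eq_exp_mul_gibbsP_mul_reverse {d : ℕ} (E : Fin d → ℝ) (βi βf : ℝ)
    (p : Fin d → Fin d → ℝ) {m n : Fin d}
    (hDB : Real.exp (-(βf * E m)) * p m n = Real.exp (-(βf * E n)) * p n m) :
    gibbsP E βi m * p m n
      = Real.exp ((βi - βf) * (E n - E m)) * (gibbsP E βi n * p n m) := by
  rw [eq_exp_mul_of_detailed_balance E βf p hDB, gibbsP_eq_exp_mul_gibbsP E βi m n]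
  have hexp : Real.exp ((βi - βf) * (E n - E m)) * Real.exp (-(βi * (E n - E m)))
      = Real.exp (-(βf * (E n - E m))) := by
    rw [← Real.exp_add]
    ring_nf
  rw [← hexp]
  ring

theorem stmt2_general {d : ℕ} (E : Fin d → ℝ) (βi βf : ℝ) (p : Fin d → Fin d → ℝ)
    (hDB : ∀ m n, Real.exp (-(βf * E m)) * p m n = Real.exp (-(βf * E n)) * p n m)
    (𝓔 : ℝ) :
    (∑ m, ∑ n, if E n - E m = 𝓔 then gibbsP E βi m * p m n else 0)
      = Real.exp ((βi - βf) * 𝓔) *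
        ∑ m, ∑ n, if E n - E m = 𝓔 then gibbsP E βi n * p n m else 0 := by
  simp_rw [Finset.mul_sum, mul_ite, mul_zero]
  refine Finset.sum_congr rfl fun m _ => Finset.sum_congr rfl fun n _ => ?_
  split_ifs with hE
  · rw [← hE]
    exact gibbsP_mul_eq_exp_mul_gibbsP_mul_reverse E βi βf p (hDB m n)
  · rfl

/-- pointwise detailed balance at inverse temperature `β_f` implies the
quantum fluctuation relation `P(+E) = e^{(β_i-β_f)E} P(-E)` for every energy value `𝓔`. -/
theorem stmt2 {d : ℕ} (E : Fin d → ℝ) (βi βf : ℝ) (p : Fin d → Fin d → ℝ)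
    (hp : ∀ m n, 0 ≤ p m n)
    (hDB : ∀ m n, Real.exp (-(βf * E m)) * p m n = Real.exp (-(βf * E n)) * p n m)
    (𝓔 : ℝ) :
    (∑ m, ∑ n, if E n - E m = 𝓔 then gibbsP E βi m * p m n else 0)
      = Real.exp ((βi - βf) * 𝓔) *
        ∑ m, ∑ n, if E n - E m = 𝓔 then gibbsP E βi n * p n m else 0 :=
  stmt2_general E βi βf p hDB 𝓔
end
end

section
/- Let K be a linear map on d×d matrices such that both K and its adjoint K^⋆ (with respect to ⟨⟨A,B⟩⟩_s = Tr[Σ^{1−s} A† Σ^s B]) preserve adjoints, i.e., (K[A])† = K[A†] and (K^⋆[A])† = K^⋆[A†]. Then K commutes with the modular-type map R_s[A] = Σ^{1−2s} A Σ^{2s−1}: K ∘ R_s = R_s ∘ K. -/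
open Matrix BigOperators
open scoped ComplexOrder

noncomputable section

/-- The positive matrix `Σ = Σ_m h_m |m⟩⟨m|` given by its spectral decomposition. -/
def specMat {d : ℕ} (v : Fin d → Fin d → ℂ) (h : Fin d → ℝ) : Mat d :=
  ∑ m, (h m : ℂ) • ketbra (v m) (v m)

/-- The real power `Σ^t` of the positive matrix `Σ = Σ_m h_m |m⟩⟨m|`,
defined via the spectral theorem. -/
def specPow {d : ℕ} (v : Fin d → Fin d → ℂ) (h : Fin d → ℝ) (t : ℝ) : Mat d :=
  ∑ m, ((h m ^ t : ℝ) : ℂ) • ketbra (v m) (v m)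

/-- The sesquilinear form `⟨⟨A,B⟩⟩_s = Tr[Σ^{1-s} A† Σ^s B]`. -/
def inn {d : ℕ} (v : Fin d → Fin d → ℂ) (h : Fin d → ℝ) (s : ℝ)
    (A B : Mat d) : ℂ :=
  (specPow v h (1 - s) * Aᴴ * specPow v h s * B).trace

/-- The modular-type map `R_s[A] = Σ^{1-2s} A Σ^{2s-1}`. -/
def Rs {d : ℕ} (v : Fin d → Fin d → ℂ) (h : Fin d → ℝ) (s : ℝ) (A : Mat d) : Mat d :=
  specPow v h (1 - 2 * s) * A * specPow v h (2 * s - 1)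

lemma vmv_mul_vmv {d : ℕ} (a b c e : Fin d → ℂ) :
    vecMulVec a b * vecMulVec c e = (b ⬝ᵥ c) • vecMulVec a e := by
  ext i j
  simp [Matrix.mul_apply, vecMulVec_apply, dotProduct, Finset.sum_mul, Finset.mul_sum]
  exact Finset.sum_congr rfl fun k _ => by ring

lemma mul_vmv {d : ℕ} (A : Mat d) (y z : Fin d → ℂ) :
    A * vecMulVec y z = vecMulVec (A *ᵥ y) z := by
  ext i j
  simp [Matrix.mul_apply, vecMulVec_apply, mulVec, dotProduct, Finset.sum_mul]
  exact Finset.sum_congr rfl fun k _ => by ring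

lemma ketbra_mul_ketbra {d : ℕ} (u x y w : Fin d → ℂ) :
    ketbra u x * ketbra y w = (star x ⬝ᵥ y) • ketbra u w := by
  simp [ketbra, vmv_mul_vmv]

lemma ketbra_conjT {d : ℕ} (u w : Fin d → ℂ) : (ketbra u w)ᴴ = ketbra w u := by
  ext i j
  simp [ketbra, vecMulVec_apply, conjTranspose_apply, mul_comm]

lemma trace_ketbra_mul {d : ℕ} (u w : Fin d → ℂ) (B : Mat d) :
    (ketbra u w * B).trace = star w ⬝ᵥ (B *ᵥ u) := by
  simp [Matrix.trace, Matrix.diag, Matrix.mul_apply, ketbra, vecMulVec_apply,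
    dotProduct, mulVec, Finset.mul_sum]
  rw [Finset.sum_comm]
  exact Finset.sum_congr rfl fun k _ => Finset.sum_congr rfl fun i _ => by ring

lemma matElem_conjT {d : ℕ} (u : Fin d → ℂ) (A : Mat d) (w : Fin d → ℂ) :
    matElem u Aᴴ w = star (matElem w A u) := by
  simp [matElem, dotProduct, mulVec, conjTranspose_apply, Finset.mul_sum]
  rw [Finset.sum_comm]
  exact Finset.sum_congr rfl fun k _ => Finset.sum_congr rfl fun i _ => by ring

lemma specPow_mul_ketbra {d : ℕ} {v : Fin d → Fin d → ℂ} (hv : ONB v)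
    (h : Fin d → ℝ) (t : ℝ) (c : Fin d) (x : Fin d → ℂ) :
    specPow v h t * ketbra (v c) x = ((h c ^ t : ℝ) : ℂ) • ketbra (v c) x := by
  have hv' : ∀ i j, star (v i) ⬝ᵥ v j = if i = j then (1:ℂ) else 0 := hv
  rw [specPow, Finset.sum_mul]
  simp only [smul_mul_assoc, ketbra_mul_ketbra, hv']
  simp [ite_smul, smul_ite, Finset.sum_ite_eq, Finset.mem_univ]

lemma ketbra_mul_specPow {d : ℕ} {v : Fin d → Fin d → ℂ} (hv : ONB v)
    (h : Fin d → ℝ) (t : ℝ) (c : Fin d) (x : Fin d → ℂ) :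
    ketbra x (v c) * specPow v h t = ((h c ^ t : ℝ) : ℂ) • ketbra x (v c) := by
  have hv' : ∀ i j, star (v i) ⬝ᵥ v j = if i = j then (1:ℂ) else 0 := hv
  rw [specPow, Finset.mul_sum]
  simp only [mul_smul_comm, ketbra_mul_ketbra, hv']
  simp [ite_smul, smul_ite, Finset.sum_ite_eq, Finset.mem_univ]

lemma ketbra_complete {d : ℕ} {v : Fin d → Fin d → ℂ} (hv : ONB v) :
    ∑ m, ketbra (v m) (v m) = (1 : Mat d) := by
  set W : Mat d := Matrix.of (fun m i => star (v m i)) with hW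
  have h1 : W * Wᴴ = 1 := by
    ext i j
    simpa [hW, Matrix.mul_apply, conjTranspose_apply, dotProduct, Matrix.one_apply]
      using hv i j
  have h2 : Wᴴ * W = 1 := mul_eq_one_comm.mp h1
  ext i j
  have := congrFun (congrFun h2 i) j
  simp only [Matrix.mul_apply, conjTranspose_apply, hW, Matrix.of_apply, star_star] at this
  rw [Matrix.sum_apply]
  simpa [ketbra, vecMulVec_apply] using this

lemma matdecomp {d : ℕ} {v : Fin d → Fin d → ℂ} (hv : ONB v) (A : Mat d) :
    A = ∑ n, ∑ m, matElem (v n) A (v m) • ketbra (v n) (v m) := by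
  have key : ∀ n m : Fin d, ketbra (v n) (v n) * A * ketbra (v m) (v m)
      = matElem (v n) A (v m) • ketbra (v n) (v m) := by
    intro n m
    rw [mul_assoc, ketbra, ketbra, mul_vmv, vmv_mul_vmv]
    rfl
  calc A = 1 * A * 1 := by rw [one_mul, mul_one]
    _ = (∑ n, ketbra (v n) (v n)) * A * (∑ m, ketbra (v m) (v m)) := by
        rw [ketbra_complete hv]
    _ = ∑ n, ∑ m, matElem (v n) A (v m) • ketbra (v n) (v m) := by
        rw [Finset.sum_mul, Finset.sum_mul]
        exact Finset.sum_congr rfl fun n _ => by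
          rw [Finset.mul_sum]
          exact Finset.sum_congr rfl fun m _ => key n m

lemma inn_ketbra_left {d : ℕ} {v : Fin d → Fin d → ℂ} (hv : ONB v)
    (h : Fin d → ℝ) (s : ℝ) (a b : Fin d) (B : Mat d) :
    inn v h s (ketbra (v a) (v b)) B
      = ((h b ^ (1-s) : ℝ) : ℂ) * ((h a ^ s : ℝ) : ℂ) * matElem (v a) B (v b) := by
  rw [inn, ketbra_conjT, specPow_mul_ketbra hv]
  simp only [Matrix.smul_mul, ketbra_mul_specPow hv, Matrix.trace_smul, trace_ketbra_mul]
  simp only [smul_eq_mul, matElem]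
  ring

lemma inn_ketbra_right {d : ℕ} {v : Fin d → Fin d → ℂ} (hv : ONB v)
    (h : Fin d → ℝ) (s : ℝ) (c e : Fin d) (A : Mat d) :
    inn v h s A (ketbra (v c) (v e))
      = ((h e ^ (1-s) : ℝ) : ℂ) * ((h c ^ s : ℝ) : ℂ) * star (matElem (v c) A (v e)) := by
  rw [inn, mul_assoc, specPow_mul_ketbra hv, Matrix.mul_smul, Matrix.trace_smul,
    Matrix.trace_mul_comm, ← mul_assoc, ketbra_mul_specPow hv, Matrix.smul_mul,
    Matrix.trace_smul, trace_ketbra_mul]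
  rw [show star (v e) ⬝ᵥ (Aᴴ *ᵥ v c) = matElem (v e) Aᴴ (v c) from rfl, matElem_conjT]
  simp only [smul_eq_mul]
  ring

lemma Rs_ketbra {d : ℕ} {v : Fin d → Fin d → ℂ} (hv : ONB v)
    (h : Fin d → ℝ) (s : ℝ) (c e : Fin d) :
    Rs v h s (ketbra (v c) (v e))
      = (((h c ^ (1-2*s) : ℝ) : ℂ) * ((h e ^ (2*s-1) : ℝ) : ℂ)) • ketbra (v c) (v e) := by
  rw [Rs, specPow_mul_ketbra hv, Matrix.smul_mul, ketbra_mul_specPow hv, smul_smul]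

lemma Rs_sum {d : ℕ} (v : Fin d → Fin d → ℂ) (h : Fin d → ℝ) (s : ℝ)
    {ι : Type*} (t : Finset ι) (f : ι → Mat d) :
    Rs v h s (∑ i ∈ t, f i) = ∑ i ∈ t, Rs v h s (f i) := by
  simp [Rs, Finset.sum_mul, Finset.mul_sum]

lemma Rs_smul {d : ℕ} (v : Fin d → Fin d → ℂ) (h : Fin d → ℝ) (s : ℝ)
    (c : ℂ) (X : Mat d) : Rs v h s (c • X) = c • Rs v h s X := by
  simp [Rs, Matrix.smul_mul, Matrix.mul_smul]

lemma keyscalar {pa pb pc pe : ℝ} (ha : 0 < pa) (hb : 0 < pb) (hc : 0 < pc) (he : 0 < pe)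
    (s : ℝ) (Y Z : ℂ)
    (e1 : ((pb^(1-s):ℝ):ℂ) * ((pa^s:ℝ):ℂ) * Y = ((pe^(1-s):ℝ):ℂ) * ((pc^s:ℝ):ℂ) * Z)
    (e2 : ((pa^(1-s):ℝ):ℂ) * ((pb^s:ℝ):ℂ) * Y = ((pc^(1-s):ℝ):ℂ) * ((pe^s:ℝ):ℂ) * Z) :
    (((pc^(1-2*s):ℝ):ℂ) * ((pe^(2*s-1):ℝ):ℂ)) * Y
      = (((pa^(1-2*s):ℝ):ℂ) * ((pb^(2*s-1):ℝ):ℂ)) * Y := by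
  have c1 : ((pe^(1-s):ℝ):ℂ) * ((pe^(2*s-1):ℝ):ℂ) = ((pe^s:ℝ):ℂ) := by
    rw [← Complex.ofReal_mul, ← Real.rpow_add he, show (1-s) + (2*s-1) = s by ring]
  have c2 : ((pc^s:ℝ):ℂ) * ((pc^(1-2*s):ℝ):ℂ) = ((pc^(1-s):ℝ):ℂ) := by
    rw [← Complex.ofReal_mul, ← Real.rpow_add hc, show s + (1-2*s) = 1-s by ring]
  have c3 : ((pb^(1-s):ℝ):ℂ) * ((pb^(2*s-1):ℝ):ℂ) = ((pb^s:ℝ):ℂ) := by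
    rw [← Complex.ofReal_mul, ← Real.rpow_add hb, show (1-s) + (2*s-1) = s by ring]
  have c4 : ((pa^s:ℝ):ℂ) * ((pa^(1-2*s):ℝ):ℂ) = ((pa^(1-s):ℝ):ℂ) := by
    rw [← Complex.ofReal_mul, ← Real.rpow_add ha, show s + (1-2*s) = 1-s by ring]
  have hne : ((pb^(1-s):ℝ):ℂ) * ((pa^s:ℝ):ℂ) * (((pe^(1-s):ℝ):ℂ) * ((pc^s:ℝ):ℂ)) ≠ 0 := by
    apply mul_ne_zero (mul_ne_zero _ _) (mul_ne_zero _ _) <;>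
      exact Complex.ofReal_ne_zero.mpr (ne_of_gt (Real.rpow_pos_of_pos (by assumption) _))
  apply mul_left_cancel₀ hne
  linear_combination (((pc^(1-s):ℝ):ℂ) * ((pe^s:ℝ):ℂ)) * e1
    - (((pe^(1-s):ℝ):ℂ) * ((pc^s:ℝ):ℂ)) * e2
    + (((pb^(1-s):ℝ):ℂ) * ((pa^s:ℝ):ℂ) * ((pc^s:ℝ):ℂ) * ((pc^(1-2*s):ℝ):ℂ) * Y) * c1
    + (((pb^(1-s):ℝ):ℂ) * ((pa^s:ℝ):ℂ) * ((pe^s:ℝ):ℂ) * Y) * c2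
    - (((pa^s:ℝ):ℂ) * ((pe^(1-s):ℝ):ℂ) * ((pc^s:ℝ):ℂ) * ((pa^(1-2*s):ℝ):ℂ) * Y) * c3
    - (((pe^(1-s):ℝ):ℂ) * ((pc^s:ℝ):ℂ) * ((pb^s:ℝ):ℂ) * Y) * c4


/-- if both `K` and its `⟨⟨·,·⟩⟩_s`-adjoint `K⋆` preserve adjoints, then
`K` commutes with the modular-type map `R_s`. -/
theorem stmt8 {d : ℕ} (v : Fin d → Fin d → ℂ) (hv : ONB v)
    (h : Fin d → ℝ) (hpos : ∀ m, 0 < h m) (s : ℝ) (hs : s ∈ Set.Icc (0:ℝ) 1)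
    (K Kstar : Mat d →ₗ[ℂ] Mat d)
    (hAdjoint : ∀ A B : Mat d, inn v h s A (K B) = inn v h s (Kstar A) B)
    (hK : ∀ A : Mat d, (K A)ᴴ = K Aᴴ)
    (hKstar : ∀ A : Mat d, (Kstar A)ᴴ = Kstar Aᴴ) :
    ∀ A : Mat d, K (Rs v h s A) = Rs v h s (K A) := by
  have scalar : ∀ c e : Fin d,
      (((h c ^ (1-2*s) : ℝ) : ℂ) * ((h e ^ (2*s-1) : ℝ) : ℂ)) • K (ketbra (v c) (v e))
        = Rs v h s (K (ketbra (v c) (v e))) := by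
    intro c e
    have KEY : ∀ a b : Fin d,
        (((h c ^ (1-2*s) : ℝ):ℂ) * ((h e ^ (2*s-1) : ℝ):ℂ))
            * matElem (v a) (K (ketbra (v c) (v e))) (v b)
        = (((h a ^ (1-2*s) : ℝ):ℂ) * ((h b ^ (2*s-1) : ℝ):ℂ))
            * matElem (v a) (K (ketbra (v c) (v e))) (v b) := by
      intro a b
      have E1 := hAdjoint (ketbra (v a) (v b)) (ketbra (v c) (v e))
      rw [inn_ketbra_left hv, inn_ketbra_right hv] at E1
      have E2 := hAdjoint (ketbra (v b) (v a)) (ketbra (v e) (v c))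
      rw [inn_ketbra_left hv, inn_ketbra_right hv] at E2
      rw [show ketbra (v e) (v c) = (ketbra (v c) (v e))ᴴ from (ketbra_conjT _ _).symm,
          show ketbra (v b) (v a) = (ketbra (v a) (v b))ᴴ from (ketbra_conjT _ _).symm,
          ← hK, ← hKstar, matElem_conjT, matElem_conjT, star_star] at E2
      have E2' := congrArg star E2
      simp only [star_mul', star_star, Complex.star_def, Complex.conj_ofReal,
        Complex.conj_conj] at E2' E1
      exact keyscalar (hpos a) (hpos b) (hpos c) (hpos e) s _ _ E1 E2'
    have hdecM := matdecomp hv (K (ketbra (v c) (v e)))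
    calc (((h c ^ (1-2*s) : ℝ) : ℂ) * ((h e ^ (2*s-1) : ℝ) : ℂ)) • K (ketbra (v c) (v e))
        = (((h c ^ (1-2*s) : ℝ) : ℂ) * ((h e ^ (2*s-1) : ℝ) : ℂ)) •
            ∑ a, ∑ b, matElem (v a) (K (ketbra (v c) (v e))) (v b) • ketbra (v a) (v b) :=
          congrArg _ hdecM
      _ = ∑ a, ∑ b, ((((h c ^ (1-2*s) : ℝ) : ℂ) * ((h e ^ (2*s-1) : ℝ) : ℂ))
            * matElem (v a) (K (ketbra (v c) (v e))) (v b)) • ketbra (v a) (v b) := by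
          simp [Finset.smul_sum, smul_smul]
      _ = ∑ a, ∑ b, (matElem (v a) (K (ketbra (v c) (v e))) (v b)
            * (((h a ^ (1-2*s) : ℝ) : ℂ) * ((h b ^ (2*s-1) : ℝ) : ℂ))) • ketbra (v a) (v b) := by
          refine Finset.sum_congr rfl fun a _ => Finset.sum_congr rfl fun b _ => ?_
          rw [(KEY a b).trans (mul_comm _ _)]
      _ = ∑ a, ∑ b, matElem (v a) (K (ketbra (v c) (v e))) (v b)
            • Rs v h s (ketbra (v a) (v b)) := by
          simp [Rs_ketbra hv, smul_smul]
      _ = Rs v h s (∑ a, ∑ b, matElem (v a) (K (ketbra (v c) (v e))) (v b)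
            • ketbra (v a) (v b)) := by
          simp [Rs_sum, Rs_smul]
      _ = Rs v h s (K (ketbra (v c) (v e))) := congrArg _ hdecM.symm
  intro A
  have hdecA := matdecomp hv A
  conv_lhs => rw [hdecA]
  conv_rhs => rw [hdecA]
  simp only [Rs_sum, Rs_smul, map_sum, _root_.map_smul, Rs_ketbra hv]
  refine Finset.sum_congr rfl fun n _ => Finset.sum_congr rfl fun m _ => ?_
  exact congrArg _ (scalar n m)
end
end
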